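/- With the notations of the Cartesian product setting and p ∈ [0,1] with λ, λ' > 0, W₁(μ_{(x₁,y₁)}^p, μ_{(x₂,y₂)}^p) ≤ λ'·W₁(μ_{x₁}^{p/λ'}, μ_{x₂}^{p/λ'}) + (1−λ')·d(x₁,x₂) + λ·W₁(μ_{y₁}^{p/λ}, μ_{y₂}^{p/λ}) + (1−λ)·d(y₁,y₂), where λ = (p·D_G + D_H)/(D_G + D_H) and λ' = (D_G + p·D_H)/(D_G + D_H). -/

import Mathlib

open scoped BigOperators

namespace OllivierLong

variable {V : Type*}

/-- A finitely supported probability distribution on `V`. -/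
def IsProb (μ : V → ℝ) : Prop :=
  (∀ v, 0 ≤ μ v) ∧ (Function.support μ).Finite ∧ ∑ᶠ v, μ v = 1

/-- A coupling (transport plan) between two distributions. -/
def IsCoupling (μ₁ μ₂ : V → ℝ) (π : V → V → ℝ) : Prop :=
  (∀ x y, 0 ≤ π x y) ∧ (∀ x, ∑ᶠ y, π x y = μ₁ x) ∧ (∀ y, ∑ᶠ x, π x y = μ₂ y)

/-- The 1-Wasserstein distance w.r.t. the combinatorial graph distance. -/
noncomputable def W1 (G : SimpleGraph V) (μ₁ μ₂ : V → ℝ) : ℝ :=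
  sInf {r | ∃ π, IsCoupling μ₁ μ₂ π ∧ r = ∑ᶠ x, ∑ᶠ y, (G.dist x y : ℝ) * π x y}

/-- A real valued function is 1-Lipschitz w.r.t. the graph distance. -/
def Lip (G : SimpleGraph V) (φ : V → ℝ) : Prop :=
  ∀ u v, |φ u - φ v| ≤ G.dist u v

/-- An integer valued function is 1-Lipschitz w.r.t. the graph distance. -/
def IntLip (G : SimpleGraph V) (φ : V → ℤ) : Prop :=
  ∀ u v, |φ u - φ v| ≤ (G.dist u v : ℤ)

open Classical in
/-- The lazy random walk measure with idleness `p` at `x`. -/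
noncomputable def mu (G : SimpleGraph V) [G.LocallyFinite] (p : ℝ) (x : V) : V → ℝ :=
  fun z => if z = x then p else if G.Adj x z then (1 - p) / (G.degree x) else 0

/-- The `p`-Ollivier-Ricci curvature. -/
noncomputable def kappa (G : SimpleGraph V) [G.LocallyFinite] (p : ℝ) (x y : V) : ℝ :=
  1 - W1 G (mu G p x) (mu G p y) / (G.dist x y)

/-- `K` is the Lin–Lu–Yau curvature of the pair `(x, y)`:
the limit of `κ_p(x,y)/(1-p)` as `p → 1⁻`. -/
def IsLLY (G : SimpleGraph V) [G.LocallyFinite] (x y : V) (K : ℝ) : Prop :=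
  Filter.Tendsto (fun p => kappa G p x y / (1 - p)) (nhdsWithin 1 (Set.Iio 1)) (nhds K)

/-!
Put `a = λ'` and `b = λ`, so that `a + b = 1 + p` and
`μ^p_(x,y) = a • (μ_x^(p/a) ⊗ δ_y) + b • (δ_x ⊗ μ_y^(p/b)) - p • δ_(x,y)` (`mu_boxProd`).
Running a plan of the first factor along `y₁ → y₂` and a plan of the second along `x₁ → x₂`
transports the first two terms at cost `a W_G + a d_H + b W_H + b d_G`, leaving a surplus `p` at
`(x₁, y₁)` and at `(x₂, y₂)`. The row of `x₁` in the first plan carries mass `p` out of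
`(x₁, y₁)`, the column of `y₂` in the second carries mass `p` into `(x₂, y₂)`; replacing both by
the direct moves from `(x₁, w)` to `(z', y₂)` saves `p (d_G + d_H)`, which is the bound, as
`1 - a = b - p` and `1 - b = a - p`.

Since `W1` is an infimum of `finsum`s, on infinite graphs it also sees couplings that hide mass
in columns of infinite support. The argument is therefore run with plans (`IsPlan`), which may
dump mass outside the support of the target measure when the graph is infinite.
-/

open Function

section Finsum

variable {α β : Type*}

lemma finsum_comp_of_support_subset_range {e : α → β} (he : Injective e) {f : β → ℝ}
    (h : support f ⊆ Set.range e) : ∑ᶠ b, f b = ∑ᶠ a, f (e a) := by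
  rw [← finsum_mem_range he, ← finsum_mem_inter_support, Set.inter_eq_right.mpr h,
    finsum_mem_support]

lemma finsum_ite_snd_eq [DecidableEq β] (b : β) (f : α → ℝ) :
    ∑ᶠ v : α × β, (if v.2 = b then f v.1 else 0) = ∑ᶠ a, f a := by
  rw [finsum_comp_of_support_subset_range (Prod.mk_left_injective b)]
  · simp
  · intro v hv
    refine ⟨v.1, Prod.ext rfl ?_⟩
    by_contra h
    exact hv (if_neg (Ne.symm h))

lemma finsum_ite_fst_eq [DecidableEq α] (a : α) (f : β → ℝ) :
    ∑ᶠ v : α × β, (if v.1 = a then f v.2 else 0) = ∑ᶠ b, f b := by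
  rw [finsum_comp_of_support_subset_range (Prod.mk_right_injective a)]
  · simp
  · intro v hv
    refine ⟨v.2, Prod.ext ?_ rfl⟩
    by_contra h
    exact hv (if_neg (Ne.symm h))

lemma finsum_ite_eq_zero_mul [DecidableEq α] {f : α → ℝ} (hf : HasFiniteSupport f) (a : α)
    (c : ℝ) : ∑ᶠ x, (if x = a then 0 else c * f x) = c * (∑ᶠ x, f x - f a) := by
  have hsplit : ∀ x, f x = (if x = a then 0 else f x) + (if x = a then f a else 0) := fun x => by
    split_ifs with h <;> simp [h]
  have hs : HasFiniteSupport fun x => if x = a then f a else 0 :=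
    (Set.finite_singleton a).subset fun x hx => by_contra fun h => hx (if_neg h)
  have hs' : HasFiniteSupport fun x => if x = a then 0 else f x :=
    hf.subset fun x hx => by_contra fun h => hx (by simp [notMem_support.mp h])
  rw [finsum_congr hsplit, finsum_add_distrib hs' hs, finsum_eq_single _ a fun x hx => if_neg hx,
    if_pos rfl, add_sub_cancel_right, mul_finsum]
  exact finsum_congr fun x => by split_ifs <;> simp

lemma eq_zero_of_finsum_eq_zero {f : α → ℝ} (hf : HasFiniteSupport f) (h0 : ∀ a, 0 ≤ f a)
    (hs : ∑ᶠ a, f a = 0) (a : α) : f a = 0 := by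
  by_contra ha
  rw [finsum_eq_sum f hf] at hs
  exact ha ((Finset.sum_eq_zero_iff_of_nonneg fun i _ => h0 i).mp hs a (hf.mem_toFinset.mpr ha))

lemma hasFiniteSupport_const_mul {f : α → ℝ} (hf : HasFiniteSupport f) (c : ℝ) :
    HasFiniteSupport fun a => c * f a :=
  hf.subset fun _ h => right_ne_zero_of_mul h

lemma hasFiniteSupport_row {f : α → β → ℝ} (hf : HasFiniteSupport (uncurry f)) (a : α) :
    HasFiniteSupport (f a) :=
  (hf.image Prod.snd).subset fun b hb => ⟨(a, b), hb, rfl⟩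

lemma hasFiniteSupport_col {f : α → β → ℝ} (hf : HasFiniteSupport (uncurry f)) (b : β) :
    HasFiniteSupport fun a => f a b :=
  (hf.image Prod.fst).subset fun a ha => ⟨(a, b), ha, rfl⟩

lemma hasFiniteSupport_finsum_mul {f : α → β → ℝ} (hf : HasFiniteSupport (uncurry f))
    (c : α → β → ℝ) : HasFiniteSupport fun a => ∑ᶠ b, c a b * f a b :=
  (hf.image Prod.fst).subset fun a ha => by
    by_contra h
    refine ha (finsum_eq_zero_of_forall_eq_zero fun b => ?_)
    have : f a b = 0 := by_contra fun hb => h ⟨(a, b), hb, rfl⟩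
    simp [this]

lemma hasFiniteSupport_ite_mul {f : α → β → ℝ} (hf : HasFiniteSupport (uncurry f))
    (P : α → β → Prop) [∀ a b, Decidable (P a b)] (c : ℝ) :
    HasFiniteSupport (uncurry fun a b => if P a b then 0 else c * f a b) :=
  hf.subset fun ⟨a, b⟩ hq h => hq (by simp_all)

lemma finsum_add_row {f g : α → β → ℝ} (hf : HasFiniteSupport (uncurry f))
    (hg : HasFiniteSupport (uncurry g)) (a : α) :
    ∑ᶠ b, (f + g) a b = ∑ᶠ b, f a b + ∑ᶠ b, g a b :=
  finsum_add_distrib (hasFiniteSupport_row hf a) (hasFiniteSupport_row hg a)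

lemma finsum_add_col {f g : α → β → ℝ} (hf : HasFiniteSupport (uncurry f))
    (hg : HasFiniteSupport (uncurry g)) (b : β) :
    ∑ᶠ a, (f + g) a b = ∑ᶠ a, f a b + ∑ᶠ a, g a b :=
  finsum_add_distrib (hasFiniteSupport_col hf b) (hasFiniteSupport_col hg b)

lemma finsum_finsum_add {f g : α → β → ℝ} (hf : HasFiniteSupport (uncurry f))
    (hg : HasFiniteSupport (uncurry g)) :
    ∑ᶠ a, ∑ᶠ b, (f a b + g a b) = ∑ᶠ a, ∑ᶠ b, f a b + ∑ᶠ a, ∑ᶠ b, g a b := by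
  have h := finsum_add_distrib hf hg
  rwa [finsum_curry _ hf, finsum_curry _ hg,
    finsum_curry _ ((hf.union hg).subset (support_add _ _))] at h

end Finsum

noncomputable def transportCost (G : SimpleGraph V) (F : V → V → ℝ) : ℝ :=
  ∑ᶠ u, ∑ᶠ v, (G.dist u v : ℝ) * F u v

section TransportCost

variable {G : SimpleGraph V}

lemma transportCost_nonneg {F : V → V → ℝ} (hF : ∀ u v, 0 ≤ F u v) : 0 ≤ transportCost G F :=
  finsum_nonneg fun u => finsum_nonneg fun v => mul_nonneg (Nat.cast_nonneg _) (hF u v)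

lemma W1_le_transportCost {μ₁ μ₂ : V → ℝ} {π : V → V → ℝ} (hπ : IsCoupling μ₁ μ₂ π) :
    W1 G μ₁ μ₂ ≤ transportCost G π :=
  csInf_le ⟨0, by rintro _ ⟨π', hπ', rfl⟩; exact transportCost_nonneg hπ'.1⟩ ⟨π, hπ, rfl⟩

lemma transportCost_add {K K' : V → V → ℝ} (hK : HasFiniteSupport (uncurry K))
    (hK' : HasFiniteSupport (uncurry K')) :
    transportCost G (K + K') = transportCost G K + transportCost G K' := by
  unfold transportCost
  simp only [Pi.add_apply, mul_add]
  exact finsum_finsum_add (hK.subset fun _ hq => right_ne_zero_of_mul hq)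
    (hK'.subset fun _ hq => right_ne_zero_of_mul hq)

lemma transportCost_ite_row_eq [DecidableEq V] {K : V → V → ℝ}
    (hK : HasFiniteSupport (uncurry K)) (x : V) (c : ℝ) :
    transportCost G (fun z z' => if z = x then 0 else c * K z z') =
      c * (transportCost G K - ∑ᶠ z', G.dist x z' * K x z') := by
  unfold transportCost
  have hrow : ∀ z, ∑ᶠ z', (G.dist z z' : ℝ) * (if z = x then 0 else c * K z z') =
      if z = x then 0 else c * ∑ᶠ z', (G.dist z z' : ℝ) * K z z' := fun z => by
    split_ifs <;> simp [mul_finsum, mul_left_comm]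
  simp only [hrow]
  exact finsum_ite_eq_zero_mul (hasFiniteSupport_finsum_mul hK _) x c

lemma transportCost_ite_col_eq [DecidableEq V] {K : V → V → ℝ}
    (hK : HasFiniteSupport (uncurry K)) (y : V) (c : ℝ) :
    transportCost G (fun w w' => if w' = y then 0 else c * K w w') =
      c * (transportCost G K - ∑ᶠ w, G.dist w y * K w y) := by
  unfold transportCost
  have hrow : ∀ w, ∑ᶠ w', (G.dist w w' : ℝ) * (if w' = y then 0 else c * K w w') =
      c * (∑ᶠ w', (G.dist w w' : ℝ) * K w w' - G.dist w y * K w y) := fun w => by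
    simp only [mul_ite, mul_zero, mul_left_comm _ c]
    exact finsum_ite_eq_zero_mul
      ((hasFiniteSupport_row hK w).subset fun w' h => right_ne_zero_of_mul h) y c
  simp only [hrow]
  rw [← mul_finsum, finsum_sub_distrib (hasFiniteSupport_finsum_mul hK _)
    ((hasFiniteSupport_col hK y).subset fun w h => right_ne_zero_of_mul h)]

/-- If `f` has infinite support, so has `G.dist u · * f` (distances vanish only on the
diagonal), and both `finsum`s are junk `0`. -/
lemma finsum_dist_mul_eq_zero (hG : G.Connected) {f : V → ℝ} (h0 : ∀ v, 0 ≤ f v)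
    (hs : ∑ᶠ v, f v = 0) (u : V) : ∑ᶠ v, (G.dist u v : ℝ) * f v = 0 := by
  by_cases hf : HasFiniteSupport f
  · simp [eq_zero_of_finsum_eq_zero hf h0 hs]
  refine finsum_of_infinite_support
    (((Set.not_finite.mp hf).sdiff (Set.finite_singleton u)).mono ?_)
  rintro v ⟨hv, hvu⟩
  have : (0 : ℝ) < G.dist u v := mod_cast hG.pos_dist_of_ne (Ne.symm hvu)
  exact mul_ne_zero this.ne' hv

end TransportCost

section Plans

variable {G : SimpleGraph V} {μ₁ μ₂ : V → ℝ}

lemma IsProb.isCoupling_mul (hμ₁ : IsProb μ₁) (hμ₂ : IsProb μ₂) :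
    IsCoupling μ₁ μ₂ fun u v => μ₁ u * μ₂ v :=
  ⟨fun u v => mul_nonneg (hμ₁.1 u) (hμ₂.1 v),
    fun u => by simp only [← mul_finsum, hμ₂.2.2, mul_one],
    fun v => by simp only [← finsum_mul, hμ₁.2.2, one_mul]⟩

/-- The couplings as `W1` sees them: on an infinite vertex type a coupling may hide mass in
columns of infinite support, where `finsum` is `0`, so mass may also go to columns outside the
support of `μ₂`. -/
structure IsPlan (μ₁ μ₂ : V → ℝ) (F : V → V → ℝ) : Prop where
  nonneg : ∀ u v, 0 ≤ F u v
  hasFiniteSupport : HasFiniteSupport (uncurry F)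
  row : ∀ u, ∑ᶠ v, F u v = μ₁ u
  col_le : ∀ v, μ₂ v ≠ 0 ∨ Finite V → ∑ᶠ u, F u v ≤ μ₂ v

lemma IsPlan.apply_eq_zero {F : V → V → ℝ} (hF : IsPlan μ₁ μ₂ F) {u : V} (hu : μ₁ u = 0)
    (v : V) : F u v = 0 :=
  eq_zero_of_finsum_eq_zero (hasFiniteSupport_row hF.hasFiniteSupport u) (hF.nonneg u)
    ((hF.row u).trans hu) v

lemma IsPlan.isCoupling [Finite V] {F : V → V → ℝ} (hF : IsPlan μ₁ μ₂ F)
    (hμ : ∑ᶠ v, μ₁ v = ∑ᶠ v, μ₂ v) : IsCoupling μ₁ μ₂ F := by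
  cases nonempty_fintype V
  refine ⟨hF.nonneg, hF.row, fun v => ?_⟩
  simp only [finsum_eq_sum_of_fintype] at hμ ⊢
  have hle : ∀ v ∈ Finset.univ, ∑ u, F u v ≤ μ₂ v := fun v _ => by
    simpa only [finsum_eq_sum_of_fintype] using hF.col_le v (Or.inr inferInstance)
  refine (Finset.sum_eq_sum_iff_of_le hle).mp ?_ v (Finset.mem_univ v)
  rw [Finset.sum_comm, ← hμ]
  exact Finset.sum_congr rfl fun u _ => by simpa only [finsum_eq_sum_of_fintype] using hF.row u

lemma IsCoupling.isPlan_restrict {π : V → V → ℝ} (hμ₁ : HasFiniteSupport μ₁)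
    (hπ : IsCoupling μ₁ μ₂ π) : IsPlan μ₁ μ₂ fun u v => if μ₁ u = 0 then 0 else π u v := by
  obtain ⟨hnn, hrow, hcol⟩ := hπ
  have hrow_fin : ∀ u, μ₁ u ≠ 0 → HasFiniteSupport (π u) := fun u hu =>
    hasFiniteSupport_of_finsum_ne_zero (hrow u ▸ hu)
  refine ⟨fun u v => ?_, ?_, fun u => ?_, fun v hv => ?_⟩
  · split_ifs
    exacts [le_rfl, hnn u v]
  · refine (hμ₁.prod (hμ₁.biUnion fun u hu => hrow_fin u hu)).subset ?_
    rintro ⟨u, v⟩ h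
    simp only [mem_support, uncurry_apply_pair] at h
    split_ifs at h with hu
    · exact absurd rfl h
    · exact ⟨hu, Set.mem_biUnion hu h⟩
  · split_ifs with hu
    exacts [by simp [hu], hrow u]
  · have hfin : HasFiniteSupport fun u => π u v :=
      hv.elim (fun hv => hasFiniteSupport_of_finsum_ne_zero (hcol v ▸ hv)) fun _ => Set.toFinite _
    refine (finsum_le_finsum' (hfin.subset fun u hu => ?_) hfin fun u => ?_).trans (hcol v).le
    · simp only [mem_support] at hu ⊢
      split_ifs at hu
      exacts [absurd rfl hu, hu]
    · dsimp only
      split_ifs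
      exacts [hnn u v, le_rfl]

lemma IsCoupling.transportCost_restrict (hG : G.Connected) {π : V → V → ℝ}
    (hπ : IsCoupling μ₁ μ₂ π) :
    transportCost G (fun u v => if μ₁ u = 0 then 0 else π u v) = transportCost G π := by
  refine finsum_congr fun u => ?_
  by_cases hu : μ₁ u = 0
  · simp only [hu, if_true, mul_zero, finsum_zero]
    exact (finsum_dist_mul_eq_zero hG (hπ.1 u) ((hπ.2.1 u).trans hu) u).symm
  · simp only [hu, if_false]

open Classical in
/-- Completes a plan to a coupling on an infinite vertex type: for `R` an infinite set of
vertices outside the supports and `o ∈ R`, the deficits of the columns in the support of `μ₂`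
are supplied from `o`, and every other column gets unit entries in the rows of `R`, so that its
`finsum` is junk `0`. -/
noncomputable def padPlan (R : Set V) (o : V) (μ₂ : V → ℝ) (F : V → V → ℝ) : V → V → ℝ :=
  fun u v => F u v +
    if μ₂ v = 0 then (if u ∈ R then 1 else 0) else (if u = o then μ₂ v - ∑ᶠ w, F w v else 0)

section Padding

variable {F : V → V → ℝ} {R : Set V} {o : V}

lemma padPlan_of_mem (hF : IsPlan μ₁ μ₂ F) (hR₁ : ∀ u ∈ R, μ₁ u = 0) (hR₂ : ∀ v ∈ R, μ₂ v = 0)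
    {u v : V} (hu : u ∈ R) (hv : v ∈ R) : padPlan R o μ₂ F u v = 1 := by
  simp [padPlan, hF.apply_eq_zero (hR₁ u hu), hR₂ v hv, hu]

lemma padPlan_of_notMem (ho : o ∈ R) {u : V} (hu : u ∉ R) : padPlan R o μ₂ F u = F u :=
  funext fun v => by
    have : u ≠ o := fun h => hu (h ▸ ho)
    simp [padPlan, hu, this]

lemma IsPlan.isCoupling_padPlan (hF : IsPlan μ₁ μ₂ F) (hR : R.Infinite)
    (hR₁ : ∀ u ∈ R, μ₁ u = 0) (hR₂ : ∀ v ∈ R, μ₂ v = 0) (ho : o ∈ R) :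
    IsCoupling μ₁ μ₂ (padPlan R o μ₂ F) := by
  classical
  refine ⟨fun u v => add_nonneg (hF.nonneg u v) ?_, fun u => ?_, fun v => ?_⟩
  · split_ifs with h₂
    all_goals first | positivity | exact sub_nonneg.mpr (hF.col_le v (Or.inl h₂))
  · by_cases hu : u ∈ R
    · rw [hR₁ u hu]
      exact finsum_of_infinite_support
        (hR.mono fun v hv => by simp [padPlan_of_mem hF hR₁ hR₂ hu hv])
    · rw [padPlan_of_notMem ho hu, hF.row u]
  · by_cases h₂ : μ₂ v = 0
    · rw [h₂]
      refine finsum_of_infinite_support (hR.mono fun u hu => ?_)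
      simp only [mem_support, padPlan, h₂, if_true, hu, hF.apply_eq_zero (hR₁ u hu)]
      norm_num
    · have hfin : HasFiniteSupport fun u => if u = o then μ₂ v - ∑ᶠ w, F w v else 0 :=
        (Set.finite_singleton o).subset fun u hu => by_contra fun h => hu (if_neg h)
      simp only [padPlan, h₂, if_false]
      rw [finsum_add_distrib (hasFiniteSupport_col hF.hasFiniteSupport v) hfin,
        finsum_eq_single _ o fun u hu => if_neg hu, if_pos rfl]
      ring

lemma IsPlan.transportCost_padPlan (hG : G.Connected) (hF : IsPlan μ₁ μ₂ F) (hR : R.Infinite)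
    (hR₁ : ∀ u ∈ R, μ₁ u = 0) (hR₂ : ∀ v ∈ R, μ₂ v = 0) (ho : o ∈ R) :
    transportCost G (padPlan R o μ₂ F) = transportCost G F := by
  refine finsum_congr fun u => ?_
  by_cases hu : u ∈ R
  · simp only [hF.apply_eq_zero (hR₁ u hu), mul_zero, finsum_zero]
    refine finsum_of_infinite_support ((hR.sdiff (Set.finite_singleton u)).mono ?_)
    rintro v ⟨hv, hvu⟩
    have : (0 : ℝ) < G.dist u v := mod_cast hG.pos_dist_of_ne (Ne.symm hvu)
    simp [padPlan_of_mem hF hR₁ hR₂ hu hv, this.ne']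
  · rw [padPlan_of_notMem ho hu]

end Padding

lemma W1_le_transportCost_of_isPlan (hG : G.Connected) (hμ₁ : IsProb μ₁) (hμ₂ : IsProb μ₂)
    {F : V → V → ℝ} (hF : IsPlan μ₁ μ₂ F) : W1 G μ₁ μ₂ ≤ transportCost G F := by
  cases finite_or_infinite V
  · exact W1_le_transportCost (hF.isCoupling (hμ₁.2.2.trans hμ₂.2.2.symm))
  · set R := (support μ₁ ∪ support μ₂)ᶜ
    have hR : R.Infinite := (hμ₁.2.1.union hμ₂.2.1).infinite_compl
    have hR₁ : ∀ u ∈ R, μ₁ u = 0 := fun u hu => notMem_support.mp fun h => hu (Or.inl h)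
    have hR₂ : ∀ v ∈ R, μ₂ v = 0 := fun v hv => notMem_support.mp fun h => hv (Or.inr h)
    obtain ⟨o, ho⟩ := hR.nonempty
    rw [← hF.transportCost_padPlan hG hR hR₁ hR₂ ho]
    exact W1_le_transportCost (hF.isCoupling_padPlan hR hR₁ hR₂ ho)

lemma le_W1_of_forall_isPlan (hG : G.Connected) (hμ₁ : IsProb μ₁) (hμ₂ : IsProb μ₂)
    {k c x : ℝ} (hk : 0 < k) (h : ∀ F, IsPlan μ₁ μ₂ F → x ≤ k * transportCost G F + c) :
    x ≤ k * W1 G μ₁ μ₂ + c := by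
  have : (x - c) / k ≤ W1 G μ₁ μ₂ := by
    refine le_csInf ⟨_, _, hμ₁.isCoupling_mul hμ₂, rfl⟩ ?_
    rintro _ ⟨π, hπ, rfl⟩
    change (x - c) / k ≤ transportCost G π
    rw [div_le_iff₀ hk, ← hπ.transportCost_restrict hG]
    linarith [h _ (hπ.isPlan_restrict hμ₁.2.1)]
  rw [div_le_iff₀ hk] at this
  linarith

end Plans

lemma le_W1_add_W1 {VG VH : Type*} {G : SimpleGraph VG} {H : SimpleGraph VH} (hG : G.Connected)
    (hH : H.Connected) {α₁ α₂ : VG → ℝ} {β₁ β₂ : VH → ℝ} (hα₁ : IsProb α₁) (hα₂ : IsProb α₂)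
    (hβ₁ : IsProb β₁) (hβ₂ : IsProb β₂) {a b c x : ℝ} (ha : 0 < a) (hb : 0 < b)
    (h : ∀ FG, IsPlan α₁ α₂ FG → ∀ FH, IsPlan β₁ β₂ FH →
      x ≤ a * transportCost G FG + b * transportCost H FH + c) :
    x ≤ a * W1 G α₁ α₂ + b * W1 H β₁ β₂ + c := by
  have := le_W1_of_forall_isPlan hG hα₁ hα₂ ha (x := x) (c := b * W1 H β₁ β₂ + c) fun FG hFG => by
    have := le_W1_of_forall_isPlan hH hβ₁ hβ₂ hb (x := x) (c := a * transportCost G FG + c)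
      fun FH hFH => by linarith [h FG hFG FH hFH]
    linarith
  linarith

section LazyWalk

variable {G : SimpleGraph V} [G.LocallyFinite]

lemma mu_self (p : ℝ) (x : V) : mu G p x x = p := by simp [mu]

lemma mu_of_adj {p : ℝ} {x z : V} (h : G.Adj x z) : mu G p x z = (1 - p) / G.degree x := by
  simp [mu, h.ne', h]

lemma mu_of_ne_of_not_adj {p : ℝ} {x z : V} (hne : z ≠ x) (h : ¬G.Adj x z) :
    mu G p x z = 0 := by
  simp [mu, hne, h]

lemma isProb_mu {p : ℝ} (hp : p ∈ Set.Icc (0 : ℝ) 1) {x : V} (hx : G.degree x ≠ 0 ∨ p = 1) :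
    IsProb (mu G p x) := by
  classical
  have hsupp : support (mu G p x) ⊆ ↑(insert x (G.neighborFinset x)) := fun z hz => by
    by_contra h
    simp only [Finset.coe_insert, Set.mem_insert_iff, SimpleGraph.coe_neighborFinset,
      SimpleGraph.mem_neighborSet, not_or] at h
    exact hz (mu_of_ne_of_not_adj h.1 h.2)
  refine ⟨fun z => ?_, (Finset.finite_toSet _).subset hsupp, ?_⟩
  · unfold mu
    split_ifs
    exacts [hp.1, div_nonneg (sub_nonneg.mpr hp.2) (Nat.cast_nonneg _), le_rfl]
  · have hnbr : ∀ z ∈ G.neighborFinset x, mu G p x z = (1 - p) / G.degree x := fun z hz =>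
      mu_of_adj ((G.mem_neighborFinset x z).mp hz)
    rw [finsum_eq_sum_of_support_subset _ hsupp,
      Finset.sum_insert (G.notMem_neighborFinset_self x), mu_self, Finset.sum_congr rfl hnbr,
      Finset.sum_const, G.card_neighborFinset_eq_degree, nsmul_eq_mul]
    rcases hx with hx | rfl
    · field_simp
      ring
    · simp

/-- For `D = 0` the walk has no neighbours to move to, and it is a probability only because the
weight equation forces `p / a = 1`. -/
lemma isProb_mu_div {D D' : ℕ} (hG : G.IsRegularOfDegree D) {p a : ℝ}
    (hp : p ∈ Set.Icc (0 : ℝ) 1) (ha : 0 < a) (hD : (0 : ℝ) < D + D')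
    (h : a * (D + D') = D + p * D') (x : V) : IsProb (mu G (p / a) x) := by
  have hpa : p ≤ a := by nlinarith [hp.2, (Nat.cast_nonneg D : (0 : ℝ) ≤ D)]
  refine isProb_mu ⟨div_nonneg hp.1 ha.le, (div_le_one ha).mpr hpa⟩ ?_
  rcases Nat.eq_zero_or_pos D with rfl | hD0
  · simp only [Nat.cast_zero, zero_add] at h hD
    rw [mul_right_cancel₀ hD.ne' h, div_self (mul_right_cancel₀ hD.ne' h ▸ ha).ne']
    exact Or.inr rfl
  · exact Or.inl (by rw [hG x]; exact hD0.ne')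

end LazyWalk

section BoxProduct

variable {VG VH : Type*} {G : SimpleGraph VG} {H : SimpleGraph VH}

lemma dist_boxProd (hG : G.Connected) (hH : H.Connected) (u v : VG × VH) :
    ((G □ H).dist u v : ℝ) = G.dist u.1 v.1 + H.dist u.2 v.2 := by
  rw [SimpleGraph.dist, SimpleGraph.edist_boxProd,
    ENat.toNat_add (SimpleGraph.edist_ne_top_iff_reachable.mpr (hG.preconnected _ _))
      (SimpleGraph.edist_ne_top_iff_reachable.mpr (hH.preconnected _ _))]
  push_cast
  rfl

def boxMix [DecidableEq VG] [DecidableEq VH] (a b p : ℝ) (x : VG) (y : VH) (α : VG → ℝ)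
    (β : VH → ℝ) : VG × VH → ℝ :=
  fun u => (if u.2 = y then a * α u.1 else 0) + (if u.1 = x then b * β u.2 else 0) -
    (if u.1 = x ∧ u.2 = y then p else 0)

lemma mu_boxProd [DecidableEq VG] [DecidableEq VH] [G.LocallyFinite] [H.LocallyFinite]
    {DG DH : ℕ} (hDG : G.IsRegularOfDegree DG) (hDH : H.IsRegularOfDegree DH) {p a b : ℝ}
    (ha0 : a ≠ 0) (hb0 : b ≠ 0) (ha : a * (DG + DH) = DG + p * DH)
    (hb : b * (DG + DH) = p * DG + DH) (x : VG) (y : VH) :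
    mu (G □ H) p (x, y) = boxMix a b p x y (mu G (p / a) x) (mu H (p / b) y) := by
  funext ⟨z, w⟩
  have hG0 : G.Adj x z → (0 : ℝ) < DG := fun h => by
    rw [← hDG x]
    exact_mod_cast (G.degree_pos_iff_exists_adj x).mpr ⟨z, h⟩
  have hH0 : H.Adj y w → (0 : ℝ) < DH := fun h => by
    rw [← hDH y]
    exact_mod_cast (H.degree_pos_iff_exists_adj y).mpr ⟨w, h⟩
  simp only [boxMix, mu, SimpleGraph.degree_boxProd, hDG x, hDH y, SimpleGraph.boxProd_adj,
    Prod.mk.injEq]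
  push_cast
  split_ifs <;> simp_all [eq_comm]
  · field_simp
    ring
  · field_simp
    linear_combination ha
  · field_simp
    linear_combination hb

def liftLeft [DecidableEq VH] (K : VG → VG → ℝ) (y y' : VH) : VG × VH → VG × VH → ℝ :=
  fun u v => if u.2 = y ∧ v.2 = y' then K u.1 v.1 else 0

def liftRight [DecidableEq VG] (x x' : VG) (K : VH → VH → ℝ) : VG × VH → VG × VH → ℝ :=
  fun u v => if u.1 = x ∧ v.1 = x' then K u.2 v.2 else 0

def liftCross [DecidableEq VG] [DecidableEq VH] (x : VG) (y' : VH) (g : VH → ℝ) (f : VG → ℝ) :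
    VG × VH → VG × VH → ℝ :=
  fun u v => if u.1 = x ∧ v.2 = y' then g u.2 * f v.1 else 0

lemma finsum_liftLeft_row [DecidableEq VH] (K : VG → VG → ℝ) (y y' : VH) (u : VG × VH) :
    ∑ᶠ v, liftLeft K y y' u v = if u.2 = y then ∑ᶠ z', K u.1 z' else 0 := by
  unfold liftLeft
  split_ifs with h
  · simpa [h] using finsum_ite_snd_eq y' (K u.1)
  · simp [h]

lemma finsum_liftLeft_col [DecidableEq VH] (K : VG → VG → ℝ) (y y' : VH) (v : VG × VH) :
    ∑ᶠ u, liftLeft K y y' u v = if v.2 = y' then ∑ᶠ z, K z v.1 else 0 := by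
  unfold liftLeft
  split_ifs with h
  · simpa [h] using finsum_ite_snd_eq y fun z => K z v.1
  · simp [h]

lemma finsum_liftRight_row [DecidableEq VG] (x x' : VG) (K : VH → VH → ℝ) (u : VG × VH) :
    ∑ᶠ v, liftRight x x' K u v = if u.1 = x then ∑ᶠ w', K u.2 w' else 0 := by
  unfold liftRight
  split_ifs with h
  · simpa [h] using finsum_ite_fst_eq x' (K u.2)
  · simp [h]

lemma finsum_liftRight_col [DecidableEq VG] (x x' : VG) (K : VH → VH → ℝ) (v : VG × VH) :
    ∑ᶠ u, liftRight x x' K u v = if v.1 = x' then ∑ᶠ w, K w v.2 else 0 := by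
  unfold liftRight
  split_ifs with h
  · simpa [h] using finsum_ite_fst_eq x fun w => K w v.2
  · simp [h]

lemma finsum_liftCross_row [DecidableEq VG] [DecidableEq VH] (x : VG) (y' : VH) (g : VH → ℝ)
    (f : VG → ℝ) (u : VG × VH) :
    ∑ᶠ v, liftCross x y' g f u v = if u.1 = x then g u.2 * ∑ᶠ z', f z' else 0 := by
  unfold liftCross
  split_ifs with h
  · simpa [h, mul_finsum] using finsum_ite_snd_eq y' fun z' => g u.2 * f z'
  · simp [h]

lemma finsum_liftCross_col [DecidableEq VG] [DecidableEq VH] (x : VG) (y' : VH) (g : VH → ℝ)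
    (f : VG → ℝ) (v : VG × VH) :
    ∑ᶠ u, liftCross x y' g f u v = if v.2 = y' then (∑ᶠ w, g w) * f v.1 else 0 := by
  unfold liftCross
  split_ifs with h
  · simpa [h, finsum_mul] using finsum_ite_fst_eq x fun w => g w * f v.1
  · simp [h]

lemma hasFiniteSupport_liftLeft [DecidableEq VH] {K : VG → VG → ℝ}
    (hK : HasFiniteSupport (uncurry K)) (y y' : VH) :
    HasFiniteSupport (uncurry (liftLeft K y y')) := by
  refine (hK.image fun q => ((q.1, y), (q.2, y'))).subset ?_
  rintro ⟨⟨z, w⟩, ⟨z', w'⟩⟩ h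
  simp only [mem_support, uncurry_apply_pair, liftLeft, ne_eq, ite_eq_right_iff,
    not_forall] at h
  obtain ⟨⟨rfl, rfl⟩, h⟩ := h
  exact ⟨(z, z'), h, rfl⟩

lemma hasFiniteSupport_liftRight [DecidableEq VG] {K : VH → VH → ℝ}
    (hK : HasFiniteSupport (uncurry K)) (x x' : VG) :
    HasFiniteSupport (uncurry (liftRight x x' K)) := by
  refine (hK.image fun q => ((x, q.1), (x', q.2))).subset ?_
  rintro ⟨⟨z, w⟩, ⟨z', w'⟩⟩ h
  simp only [mem_support, uncurry_apply_pair, liftRight, ne_eq, ite_eq_right_iff,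
    not_forall] at h
  obtain ⟨⟨rfl, rfl⟩, h⟩ := h
  exact ⟨(w, w'), h, rfl⟩

lemma hasFiniteSupport_liftCross [DecidableEq VG] [DecidableEq VH] {g : VH → ℝ} {f : VG → ℝ}
    (hg : HasFiniteSupport g) (hf : HasFiniteSupport f) (x : VG) (y' : VH) :
    HasFiniteSupport (uncurry (liftCross x y' g f)) := by
  refine ((hg.prod hf).image fun q => ((x, q.1), (q.2, y'))).subset ?_
  rintro ⟨⟨z, w⟩, ⟨z', w'⟩⟩ h
  simp only [mem_support, uncurry_apply_pair, liftCross, ne_eq, ite_eq_right_iff,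
    not_forall] at h
  obtain ⟨⟨rfl, rfl⟩, h⟩ := h
  exact ⟨(w, z'), ⟨left_ne_zero_of_mul h, right_ne_zero_of_mul h⟩, rfl⟩

lemma transportCost_liftLeft [DecidableEq VH] (hG : G.Connected) (hH : H.Connected)
    {K : VG → VG → ℝ} (hK : HasFiniteSupport (uncurry K)) (y y' : VH) :
    transportCost (G □ H) (liftLeft K y y') =
      transportCost G K + (∑ᶠ z, ∑ᶠ z', K z z') * H.dist y y' := by
  have hpt : ∀ u v, ((G □ H).dist u v : ℝ) * liftLeft K y y' u v =
      liftLeft (fun z z' => (G.dist z z' : ℝ) * K z z' + H.dist y y' * K z z') y y' u v := by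
    rintro ⟨z, w⟩ ⟨z', w'⟩
    unfold liftLeft
    split_ifs with h
    · obtain ⟨rfl, rfl⟩ := h
      rw [dist_boxProd hG hH]
      ring
    · rw [mul_zero]
  have hmul : ∀ c : VG → VG → ℝ, HasFiniteSupport (uncurry fun z z' => c z z' * K z z') :=
    fun c => hK.subset fun q hq => right_ne_zero_of_mul hq
  unfold transportCost
  simp only [hpt, finsum_liftLeft_row]
  rw [finsum_ite_snd_eq y fun z => ∑ᶠ z', ((G.dist z z' : ℝ) * K z z' + H.dist y y' * K z z'),
    finsum_finsum_add (hmul _) (hmul _)]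
  congr 1
  simp only [finsum_mul]
  exact finsum_congr fun z => finsum_congr fun z' => mul_comm _ _

lemma transportCost_liftRight [DecidableEq VG] (hG : G.Connected) (hH : H.Connected)
    {K : VH → VH → ℝ} (hK : HasFiniteSupport (uncurry K)) (x x' : VG) :
    transportCost (G □ H) (liftRight x x' K) =
      transportCost H K + (∑ᶠ w, ∑ᶠ w', K w w') * G.dist x x' := by
  have hpt : ∀ u v, ((G □ H).dist u v : ℝ) * liftRight x x' K u v =
      liftRight x x' (fun w w' => (H.dist w w' : ℝ) * K w w' + G.dist x x' * K w w') u v := by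
    rintro ⟨z, w⟩ ⟨z', w'⟩
    unfold liftRight
    split_ifs with h
    · obtain ⟨rfl, rfl⟩ := h
      rw [dist_boxProd hG hH]
      ring
    · rw [mul_zero]
  have hmul : ∀ c : VH → VH → ℝ, HasFiniteSupport (uncurry fun w w' => c w w' * K w w') :=
    fun c => hK.subset fun q hq => right_ne_zero_of_mul hq
  unfold transportCost
  simp only [hpt, finsum_liftRight_row]
  rw [finsum_ite_fst_eq x fun w => ∑ᶠ w', ((H.dist w w' : ℝ) * K w w' + G.dist x x' * K w w'),
    finsum_finsum_add (hmul _) (hmul _)]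
  congr 1
  simp only [finsum_mul]
  exact finsum_congr fun w => finsum_congr fun w' => mul_comm _ _

lemma transportCost_liftCross [DecidableEq VG] [DecidableEq VH] (hG : G.Connected)
    (hH : H.Connected) {g : VH → ℝ} {f : VG → ℝ} (hg : HasFiniteSupport g)
    (hf : HasFiniteSupport f) (x : VG) (y' : VH) :
    transportCost (G □ H) (liftCross x y' g f) =
      (∑ᶠ w, g w) * ∑ᶠ z', G.dist x z' * f z' + (∑ᶠ w, H.dist w y' * g w) * ∑ᶠ z', f z' := by
  have hpt : ∀ u v, ((G □ H).dist u v : ℝ) * liftCross x y' g f u v =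
      liftCross x y' g (fun z' => G.dist x z' * f z') u v +
        liftCross x y' (fun w => H.dist w y' * g w) f u v := by
    rintro ⟨z, w⟩ ⟨z', w'⟩
    unfold liftCross
    split_ifs with h
    · obtain ⟨rfl, rfl⟩ := h
      rw [dist_boxProd hG hH]
      ring
    · simp
  have hfin : ∀ (g' : VH → ℝ) (f' : VG → ℝ), support g' ⊆ support g → support f' ⊆ support f →
      HasFiniteSupport (uncurry (liftCross x y' g' f')) := fun g' f' hg' hf' =>
    hasFiniteSupport_liftCross (hg.subset hg') (hf.subset hf') x y'
  unfold transportCost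
  simp only [hpt]
  rw [finsum_finsum_add (hfin _ _ subset_rfl fun z' h => right_ne_zero_of_mul h)
    (hfin _ _ (fun w h => right_ne_zero_of_mul h) subset_rfl)]
  simp only [finsum_liftCross_row]
  rw [finsum_ite_fst_eq x fun w => g w * ∑ᶠ z', G.dist x z' * f z',
    finsum_ite_fst_eq x fun w => H.dist w y' * g w * ∑ᶠ z', f z', finsum_mul, finsum_mul]

/-- On an infinite product the columns `(x₁, w')`, `w' ≠ y₂`, lie outside the support of the
target, so the second factor may stay at `x₁`; this absorbs the deficit of the column `y₂` of
`FH` below `β₂ y₂`. On a finite product that column is exact. -/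
lemma IsPlan.exists_target {β₁ β₂ : VH → ℝ} {FH : VH → VH → ℝ} {b p : ℝ} {y₂ : VH}
    (hFH : IsPlan β₁ β₂ FH) (hβ₁ : IsProb β₁) (hβ₂ : IsProb β₂)
    (hpb : p ≤ b) (hβ₂y : b * β₂ y₂ = p) (G : SimpleGraph VG) (x₁ x₂ : VG) :
    ∃ x', (x' = x₂ ∨ Infinite (VG × VH)) ∧
      b * (1 - ∑ᶠ w, FH w y₂) * G.dist x₁ x' ≤ (b - p) * G.dist x₁ x₂ := by
  rcases finite_or_infinite (VG × VH) with hfin | hinf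
  · have : Nonempty VG := ⟨x₁⟩
    have : Finite VH := .prod_right VG
    refine ⟨x₂, Or.inl rfl, le_of_eq ?_⟩
    rw [(hFH.isCoupling (hβ₁.2.2.trans hβ₂.2.2.symm)).2.2 y₂, mul_sub, hβ₂y, mul_one]
  · refine ⟨x₁, Or.inr hinf, ?_⟩
    simpa using mul_nonneg (sub_nonneg.mpr hpb) (Nat.cast_nonneg (G.dist x₁ x₂))

def boxPlan [DecidableEq VG] [DecidableEq VH] (a b : ℝ) (x₁ x' : VG) (y₁ y₂ : VH)
    (FG : VG → VG → ℝ) (FH : VH → VH → ℝ) (f : VG → ℝ) : VG × VH → VG × VH → ℝ :=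
  liftLeft (fun z z' => if z = x₁ then 0 else a * FG z z') y₁ y₂ +
    liftRight x₁ x' (fun w w' => if w' = y₂ then 0 else b * FH w w') +
    liftCross x₁ y₂ (fun w => b * FH w y₂) f

variable [DecidableEq VG] [DecidableEq VH] {a b p : ℝ} {x₁ x₂ x' : VG} {y₁ y₂ : VH}
  {α₁ α₂ : VG → ℝ} {β₁ β₂ : VH → ℝ} {FG : VG → VG → ℝ} {FH : VH → VH → ℝ} {f : VG → ℝ}

lemma hasFiniteSupport_boxPlan_blocks (a b : ℝ) (x₁ x' : VG) (y₁ y₂ : VH)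
    (hFG : HasFiniteSupport (uncurry FG)) (hFH : HasFiniteSupport (uncurry FH))
    (hf : HasFiniteSupport f) :
    HasFiniteSupport (uncurry (liftLeft (fun z z' => if z = x₁ then 0 else a * FG z z') y₁ y₂)) ∧
      HasFiniteSupport
        (uncurry (liftRight x₁ x' fun w w' => if w' = y₂ then 0 else b * FH w w')) ∧
      HasFiniteSupport (uncurry (liftCross x₁ y₂ (fun w => b * FH w y₂) f)) :=
  ⟨hasFiniteSupport_liftLeft (hasFiniteSupport_ite_mul hFG _ a) y₁ y₂,
    hasFiniteSupport_liftRight (hasFiniteSupport_ite_mul hFH _ b) x₁ x',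
    hasFiniteSupport_liftCross (hasFiniteSupport_const_mul (hasFiniteSupport_col hFH y₂) b) hf
      x₁ y₂⟩

lemma boxPlan_nonneg (hFG : ∀ z z', 0 ≤ FG z z') (hFH : ∀ w w', 0 ≤ FH w w') (hf : ∀ z, 0 ≤ f z)
    (ha : 0 ≤ a) (hb : 0 ≤ b) (u v : VG × VH) : 0 ≤ boxPlan a b x₁ x' y₁ y₂ FG FH f u v := by
  simp only [boxPlan, liftLeft, liftRight, liftCross, Pi.add_apply]
  refine add_nonneg (add_nonneg ?_ ?_) ?_ <;> split_ifs <;>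
    first
    | exact le_rfl
    | exact mul_nonneg ha (hFG _ _)
    | exact mul_nonneg hb (hFH _ _)
    | exact mul_nonneg (mul_nonneg hb (hFH _ _)) (hf _)

lemma finsum_boxPlan_row (hFG : IsPlan α₁ α₂ FG) (hFH : IsPlan β₁ β₂ FH)
    (hf : HasFiniteSupport f) (hf1 : ∑ᶠ z, f z = 1) (hx₁ : a * α₁ x₁ = p) (u : VG × VH) :
    ∑ᶠ v, boxPlan a b x₁ x' y₁ y₂ FG FH f u v = boxMix a b p x₁ y₁ α₁ β₁ u := by
  obtain ⟨hA, hB, hC⟩ := hasFiniteSupport_boxPlan_blocks a b x₁ x' y₁ y₂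
    hFG.hasFiniteSupport hFH.hasFiniteSupport hf
  have hArow : ∑ᶠ z', (if u.1 = x₁ then 0 else a * FG u.1 z') =
      if u.1 = x₁ then 0 else a * α₁ u.1 := by
    split_ifs <;> simp [← mul_finsum, hFG.row]
  have hBrow : ∑ᶠ w', (if w' = y₂ then 0 else b * FH u.2 w') = b * (β₁ u.2 - FH u.2 y₂) := by
    rw [finsum_ite_eq_zero_mul (hasFiniteSupport_row hFH.hasFiniteSupport u.2), hFH.row]
  rw [boxPlan, finsum_add_row (hA.add hB) hC, finsum_add_row hA hB, finsum_liftLeft_row,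
    finsum_liftRight_row, finsum_liftCross_row, hArow, hBrow, hf1, boxMix]
  by_cases h₁ : u.1 = x₁ <;> by_cases h₂ : u.2 = y₁ <;> simp [h₁, h₂, ← hx₁] <;> ring

lemma finsum_boxPlan_col (hFG : HasFiniteSupport (uncurry FG))
    (hFH : HasFiniteSupport (uncurry FH)) (hf : HasFiniteSupport f) (v : VG × VH) :
    ∑ᶠ u, boxPlan a b x₁ x' y₁ y₂ FG FH f u v =
      (if v.2 = y₂ then a * (∑ᶠ z, FG z v.1 - FG x₁ v.1) + b * (∑ᶠ w, FH w y₂) * f v.1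
        else 0) + (if v.1 = x' ∧ v.2 ≠ y₂ then b * ∑ᶠ w, FH w v.2 else 0) := by
  obtain ⟨hA, hB, hC⟩ := hasFiniteSupport_boxPlan_blocks a b x₁ x' y₁ y₂ hFG hFH hf
  rw [boxPlan, finsum_add_col (hA.add hB) hC, finsum_add_col hA hB, finsum_liftLeft_col,
    finsum_liftRight_col, finsum_liftCross_col,
    finsum_ite_eq_zero_mul (hasFiniteSupport_col hFG v.1), ← mul_finsum]
  by_cases h₁ : v.1 = x' <;> by_cases h₂ : v.2 = y₂ <;> simp [h₁, h₂, mul_finsum]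

lemma finsum_boxPlan_col_le (hFG : HasFiniteSupport (uncurry FG)) (hFH : IsPlan β₁ β₂ FH)
    (hβ₂ : ∀ w, 0 ≤ β₂ w) (hb : 0 ≤ b) (hβ₂y : b * β₂ y₂ = p) (hf : HasFiniteSupport f)
    (hcol : ∀ z', a * α₂ z' ≠ 0 ∨ Finite (VG × VH) →
      a * (∑ᶠ z, FG z z' - FG x₁ z') + b * (∑ᶠ w, FH w y₂) * f z' ≤ a * α₂ z')
    (hx' : x' = x₂ ∨ Infinite (VG × VH)) (v : VG × VH)
    (hv : boxMix a b p x₂ y₂ α₂ β₂ v ≠ 0 ∨ Finite (VG × VH)) :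
    ∑ᶠ u, boxPlan a b x₁ x' y₁ y₂ FG FH f u v ≤ boxMix a b p x₂ y₂ α₂ β₂ v := by
  obtain ⟨z', w'⟩ := v
  rw [finsum_boxPlan_col hFG hFH.hasFiniteSupport hf]
  simp only [boxMix] at hv ⊢
  by_cases hw : w' = y₂
  · subst hw
    by_cases hz : z' = x₂
    · subst hz
      simp only [if_true, ne_eq, not_true_eq_false, and_false, if_false, add_zero, and_self,
        hβ₂y, add_sub_cancel_right] at hv ⊢
      exact hcol _ hv
    · simp only [if_true, ne_eq, not_true_eq_false, and_false, if_false, add_zero, hz,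
        false_and, sub_zero] at hv ⊢
      exact hcol _ hv
  simp only [hw, if_false, and_false, sub_zero, zero_add, ne_eq, not_false_eq_true,
    and_true] at hv ⊢
  by_cases hz : z' = x'
  · subst hz
    by_cases hz₂ : z' = x₂
    · subst hz₂
      simp only [if_true] at hv ⊢
      refine mul_le_mul_of_nonneg_left (hFH.col_le w' (hv.imp right_ne_zero_of_mul ?_)) hb
      exact fun (_ : Finite (VG × VH)) => have : Nonempty VG := ⟨z'⟩; .prod_right VG
    · simp only [hz₂, if_false, not_true_eq_false, false_or] at hv
      exact absurd hv (not_finite_iff_infinite.mpr (hx'.resolve_left hz₂))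
  · simp only [hz, if_false]
    split_ifs
    exacts [mul_nonneg hb (hβ₂ w'), le_rfl]

lemma transportCost_boxPlan (hG : G.Connected) (hH : H.Connected) (hFG : IsPlan α₁ α₂ FG)
    (hFH : IsPlan β₁ β₂ FH) (hα₁ : IsProb α₁) (hβ₁ : IsProb β₁) (hf : HasFiniteSupport f)
    (hf1 : ∑ᶠ z, f z = 1) :
    transportCost (G □ H) (boxPlan a b x₁ x' y₁ y₂ FG FH f) =
      a * (transportCost G FG - ∑ᶠ z', G.dist x₁ z' * FG x₁ z') +
        a * (1 - α₁ x₁) * H.dist y₁ y₂ + b * transportCost H FH +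
        b * (1 - ∑ᶠ w, FH w y₂) * G.dist x₁ x' +
        b * (∑ᶠ w, FH w y₂) * ∑ᶠ z', G.dist x₁ z' * f z' := by
  obtain ⟨hA, hB, hC⟩ := hasFiniteSupport_boxPlan_blocks a b x₁ x' y₁ y₂
    hFG.hasFiniteSupport hFH.hasFiniteSupport hf
  have hAmass : ∑ᶠ z, ∑ᶠ z', (if z = x₁ then 0 else a * FG z z') = a * (1 - α₁ x₁) := by
    have hrow : ∀ z, ∑ᶠ z', (if z = x₁ then 0 else a * FG z z') =
        if z = x₁ then 0 else a * α₁ z := fun z => by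
      split_ifs <;> simp [← mul_finsum, hFG.row]
    rw [finsum_congr hrow, finsum_ite_eq_zero_mul hα₁.2.1, hα₁.2.2]
  have hBmass : ∑ᶠ w, ∑ᶠ w', (if w' = y₂ then 0 else b * FH w w') =
      b * (1 - ∑ᶠ w, FH w y₂) := by
    simp only [finsum_ite_eq_zero_mul (hasFiniteSupport_row hFH.hasFiniteSupport _), hFH.row]
    rw [← mul_finsum, finsum_sub_distrib hβ₁.2.1 (hasFiniteSupport_col hFH.hasFiniteSupport y₂),
      hβ₁.2.2]
  rw [boxPlan, transportCost_add (hA.add hB) hC, transportCost_add hA hB,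
    transportCost_liftLeft hG hH (hasFiniteSupport_ite_mul hFG.hasFiniteSupport _ a),
    transportCost_liftRight hG hH (hasFiniteSupport_ite_mul hFH.hasFiniteSupport _ b),
    transportCost_liftCross hG hH
      (hasFiniteSupport_const_mul (hasFiniteSupport_col hFH.hasFiniteSupport y₂) b) hf,
    transportCost_ite_row_eq hFG.hasFiniteSupport, transportCost_ite_col_eq hFH.hasFiniteSupport,
    hAmass, hBmass, hf1, ← mul_finsum]
  simp only [mul_left_comm _ b, ← mul_finsum]
  ring

lemma isPlan_boxPlan (hFG : IsPlan α₁ α₂ FG) (hFH : IsPlan β₁ β₂ FH) (hβ₂ : ∀ w, 0 ≤ β₂ w)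
    (ha : 0 ≤ a) (hb : 0 ≤ b) (hα₁x : a * α₁ x₁ = p) (hβ₂y : b * β₂ y₂ = p)
    (hf : HasFiniteSupport f) (hf0 : ∀ z, 0 ≤ f z) (hf1 : ∑ᶠ z, f z = 1)
    (hcol : ∀ z', a * α₂ z' ≠ 0 ∨ Finite (VG × VH) →
      a * (∑ᶠ z, FG z z' - FG x₁ z') + b * (∑ᶠ w, FH w y₂) * f z' ≤ a * α₂ z')
    (hx' : x' = x₂ ∨ Infinite (VG × VH)) :
    IsPlan (boxMix a b p x₁ y₁ α₁ β₁) (boxMix a b p x₂ y₂ α₂ β₂)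
      (boxPlan a b x₁ x' y₁ y₂ FG FH f) :=
  have ⟨hA, hB, hC⟩ := hasFiniteSupport_boxPlan_blocks a b x₁ x' y₁ y₂
    hFG.hasFiniteSupport hFH.hasFiniteSupport hf
  ⟨boxPlan_nonneg hFG.nonneg hFH.nonneg hf0 ha hb, (hA.add hB).add hC,
    finsum_boxPlan_row hFG hFH hf hf1 hα₁x,
    finsum_boxPlan_col_le hFG.hasFiniteSupport hFH hβ₂ hb hβ₂y hf hcol hx'⟩

/-- For `p = 0` the removed row of `FG` is empty and cannot carry the removed column, which is
put back where it was: `f = δ_{x₂}`. -/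
lemma exists_isPlan_boxMix_zero (hG : G.Connected) (hH : H.Connected) (ha : 0 < a) (hb : 0 ≤ b)
    (hα₁ : IsProb α₁) (hβ₁ : IsProb β₁) (hβ₂ : IsProb β₂) (hα₁x : a * α₁ x₁ = 0)
    (hα₂x : a * α₂ x₂ = 0) (hβ₂y : b * β₂ y₂ = 0) (hFG : IsPlan α₁ α₂ FG)
    (hFH : IsPlan β₁ β₂ FH) :
    ∃ F, IsPlan (boxMix a b 0 x₁ y₁ α₁ β₁) (boxMix a b 0 x₂ y₂ α₂ β₂) F ∧
      transportCost (G □ H) F ≤ a * transportCost G FG + b * G.dist x₁ x₂ +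
        b * transportCost H FH + a * H.dist y₁ y₂ := by
  set δ : VG → ℝ := fun z => if z = x₂ then 1 else 0
  have hδ : HasFiniteSupport δ :=
    (Set.finite_singleton x₂).subset fun z hz => by_contra fun h => hz (if_neg h)
  have hδ1 : ∀ g : VG → ℝ, ∑ᶠ z, g z * δ z = g x₂ := fun g => by
    rw [finsum_eq_single _ x₂ fun z hz => by simp [δ, hz]]
    simp [δ]
  refine ⟨boxPlan a b x₁ x₂ y₁ y₂ FG FH δ, isPlan_boxPlan hFG hFH hβ₂.1 ha.le hb hα₁x hβ₂y hδ
    (fun z => by simp only [δ]; split_ifs <;> norm_num) (by simpa using hδ1 1)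
    (fun z' h => ?_) (Or.inl rfl), ?_⟩
  · have : Nonempty VH := ⟨y₁⟩
    have hcol := mul_le_mul_of_nonneg_left (hFG.col_le z'
      (h.imp right_ne_zero_of_mul fun (_ : Finite (VG × VH)) => .prod_left VH)) ha.le
    by_cases hz : z' = x₂
    · subst hz
      have : Nonempty VG := ⟨x₁⟩
      have hfin : Finite (VG × VH) := h.resolve_left (not_not.mpr hα₂x)
      have ht : b * ∑ᶠ w, FH w y₂ ≤ 0 :=
        hβ₂y ▸ mul_le_mul_of_nonneg_left (hFH.col_le y₂ (Or.inr (.prod_right VG))) hb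
      simp only [δ, if_true, mul_one]
      nlinarith [hFG.nonneg x₁ z']
    · simp only [δ, hz, if_false, mul_zero, add_zero]
      nlinarith [hFG.nonneg x₁ z']
  · rw [transportCost_boxPlan hG hH hFG hFH hα₁ hβ₁ hδ (by simpa using hδ1 1), hδ1]
    have : a * (1 - α₁ x₁) = a := by rw [mul_sub, hα₁x]; ring
    nlinarith [finsum_nonneg fun z' =>
      mul_nonneg (Nat.cast_nonneg (G.dist x₁ z')) (hFG.nonneg x₁ z')]

/-- For `p > 0` the removed column follows the normalised removed row: `f = (a / p) • FG x₁`. -/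
lemma exists_isPlan_boxMix_of_pos (hG : G.Connected) (hH : H.Connected) (hp : 0 < p)
    (ha : 0 < a) (hpb : p ≤ b) (hα₁ : IsProb α₁) (hβ₁ : IsProb β₁) (hβ₂ : IsProb β₂)
    (hα₁x : a * α₁ x₁ = p) (hβ₂y : b * β₂ y₂ = p) (hFG : IsPlan α₁ α₂ FG)
    (hFH : IsPlan β₁ β₂ FH) :
    ∃ F, IsPlan (boxMix a b p x₁ y₁ α₁ β₁) (boxMix a b p x₂ y₂ α₂ β₂) F ∧
      transportCost (G □ H) F ≤ a * transportCost G FG + (b - p) * G.dist x₁ x₂ +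
        b * transportCost H FH + (a - p) * H.dist y₁ y₂ := by
  have hb : 0 ≤ b := hp.le.trans hpb
  have ht : b * ∑ᶠ w, FH w y₂ ≤ p := hβ₂y ▸ mul_le_mul_of_nonneg_left
    (hFH.col_le y₂ (Or.inl fun h => by simp [h] at hβ₂y; linarith)) hb
  have hbt : b * (∑ᶠ w, FH w y₂) * (a / p) ≤ a := by
    rw [mul_div, div_le_iff₀ hp, mul_comm a]
    exact mul_le_mul_of_nonneg_right ht ha.le
  obtain ⟨x', hx', hdist⟩ := hFH.exists_target hβ₁ hβ₂ hpb hβ₂y G x₁ x₂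
  set f : VG → ℝ := fun z' => a / p * FG x₁ z'
  have hf : HasFiniteSupport f :=
    hasFiniteSupport_const_mul (hasFiniteSupport_row hFG.hasFiniteSupport x₁) _
  have hf1 : ∑ᶠ z', f z' = 1 := by
    rw [← mul_finsum, hFG.row, div_mul_eq_mul_div, hα₁x, div_self hp.ne']
  refine ⟨boxPlan a b x₁ x' y₁ y₂ FG FH f, isPlan_boxPlan hFG hFH hβ₂.1 ha.le hb hα₁x hβ₂y hf
    (fun z' => mul_nonneg (div_nonneg ha.le hp.le) (hFG.nonneg _ _)) hf1 (fun z' h => ?_) hx', ?_⟩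
  · have : Nonempty VH := ⟨y₁⟩
    have hcol := mul_le_mul_of_nonneg_left (hFG.col_le z'
      (h.imp right_ne_zero_of_mul fun (_ : Finite (VG × VH)) => .prod_left VH)) ha.le
    have := mul_le_mul_of_nonneg_right hbt (hFG.nonneg x₁ z')
    simp only [f]
    nlinarith
  · have hfG : ∑ᶠ z', (G.dist x₁ z' : ℝ) * f z' = a / p * ∑ᶠ z', G.dist x₁ z' * FG x₁ z' := by
      simp only [f, mul_left_comm _ (a / p), ← mul_finsum]
    rw [transportCost_boxPlan hG hH hFG hFH hα₁ hβ₁ hf hf1, hfG]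
    have : a * (1 - α₁ x₁) = a - p := by rw [mul_sub, hα₁x, mul_one]
    nlinarith [mul_le_mul_of_nonneg_right hbt (finsum_nonneg fun z' =>
      mul_nonneg (Nat.cast_nonneg (G.dist x₁ z')) (hFG.nonneg x₁ z'))]

theorem exists_isPlan_boxMix (hG : G.Connected) (hH : H.Connected) (hp : 0 ≤ p) (ha : 0 < a)
    (hpb : p ≤ b) (hα₁ : IsProb α₁) (hβ₁ : IsProb β₁) (hβ₂ : IsProb β₂)
    (hα₁x : a * α₁ x₁ = p) (hα₂x : a * α₂ x₂ = p) (hβ₂y : b * β₂ y₂ = p)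
    (hFG : IsPlan α₁ α₂ FG) (hFH : IsPlan β₁ β₂ FH) :
    ∃ F, IsPlan (boxMix a b p x₁ y₁ α₁ β₁) (boxMix a b p x₂ y₂ α₂ β₂) F ∧
      transportCost (G □ H) F ≤ a * transportCost G FG + (b - p) * G.dist x₁ x₂ +
        b * transportCost H FH + (a - p) * H.dist y₁ y₂ := by
  rcases hp.eq_or_lt with rfl | hp
  · simpa using exists_isPlan_boxMix_zero hG hH ha hpb hα₁ hβ₁ hβ₂ hα₁x hα₂x hβ₂y hFG hFH
  · exact exists_isPlan_boxMix_of_pos hG hH hp ha hpb hα₁ hβ₁ hβ₂ hα₁x hβ₂y hFG hFH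

end BoxProduct

theorem W1_boxProd_le_of_weights {VG VH : Type*} {G : SimpleGraph VG} {H : SimpleGraph VH}
    (hG : G.Connected) (hH : H.Connected) [G.LocallyFinite] [H.LocallyFinite] {DG DH : ℕ}
    (hDG : G.IsRegularOfDegree DG) (hDH : H.IsRegularOfDegree DH) (x₁ x₂ : VG) (y₁ y₂ : VH)
    {p a b : ℝ} (hp : p ∈ Set.Icc (0 : ℝ) 1) (ha0 : 0 < a) (hb0 : 0 < b) (hD : (0 : ℝ) < DG + DH)
    (ha : a * (DG + DH) = DG + p * DH) (hb : b * (DH + DG) = DH + p * DG) :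
    W1 (G □ H) (mu (G □ H) p (x₁, y₁)) (mu (G □ H) p (x₂, y₂)) ≤
      a * W1 G (mu G (p / a) x₁) (mu G (p / a) x₂) + (1 - a) * G.dist x₁ x₂ +
        b * W1 H (mu H (p / b) y₁) (mu H (p / b) y₂) + (1 - b) * H.dist y₁ y₂ := by
  classical
  have hμG := isProb_mu_div hDG hp ha0 hD ha
  have hμH := isProb_mu_div hDH hp hb0 (by linarith) hb
  have hμP : ∀ x y, IsProb (mu (G □ H) p (x, y)) := fun x y => isProb_mu hp <| Or.inl <| by
    rw [SimpleGraph.degree_boxProd, hDG x, hDH y]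
    exact_mod_cast hD.ne'
  have hmix := mu_boxProd hDG hDH ha0.ne' hb0.ne' ha (by linarith)
  have hpb : p ≤ b := by nlinarith [hp.2, (Nat.cast_nonneg DG : (0 : ℝ) ≤ DG)]
  refine (le_W1_add_W1 hG hH (hμG x₁) (hμG x₂) (hμH y₁) (hμH y₂) ha0 hb0
    (c := (b - p) * G.dist x₁ x₂ + (a - p) * H.dist y₁ y₂) fun FG hFG FH hFH => ?_).trans_eq
    (by nlinarith)
  obtain ⟨F, hF, hcost⟩ := exists_isPlan_boxMix hG hH hp.1 ha0 hpb (hμG x₁) (hμH y₁) (hμH y₂)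
    (by rw [mu_self, mul_div_cancel₀ _ ha0.ne']) (by rw [mu_self, mul_div_cancel₀ _ ha0.ne'])
    (by rw [mu_self, mul_div_cancel₀ _ hb0.ne']) hFG hFH
  rw [← hmix, ← hmix] at hF
  exact (W1_le_transportCost_of_isPlan (hG.boxProd hH) (hμP x₁ y₁) (hμP x₂ y₂) hF).trans
    (by linarith)

/-- upper bound for the Wasserstein distance in the Cartesian
product. -/
theorem W1_boxProd_upper {VG VH : Type*} (G : SimpleGraph VG) (H : SimpleGraph VH)
    (hG : G.Connected) (hH : H.Connected) [G.LocallyFinite] [H.LocallyFinite]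
    (DG DH : ℕ) (hDG : G.IsRegularOfDegree DG) (hDH : H.IsRegularOfDegree DH)
    (x₁ x₂ : VG) (y₁ y₂ : VH) (p : ℝ) (hp : p ∈ Set.Icc (0 : ℝ) 1)
    (hl : 0 < (p * DG + DH) / (DG + DH)) (hl' : 0 < (DG + p * DH) / (DG + DH)) :
    W1 (G.boxProd H) (mu (G.boxProd H) p (x₁, y₁)) (mu (G.boxProd H) p (x₂, y₂)) ≤
      ((DG + p * DH) / (DG + DH)) *
          W1 G (mu G (p / ((DG + p * DH) / (DG + DH))) x₁)
            (mu G (p / ((DG + p * DH) / (DG + DH))) x₂) +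
        (1 - (DG + p * DH) / (DG + DH)) * (G.dist x₁ x₂ : ℝ) +
        ((p * DG + DH) / (DG + DH)) *
          W1 H (mu H (p / ((p * DG + DH) / (DG + DH))) y₁)
            (mu H (p / ((p * DG + DH) / (DG + DH))) y₂) +
        (1 - (p * DG + DH) / (DG + DH)) * (H.dist y₁ y₂ : ℝ) := by
  have hD : (0 : ℝ) < DG + DH := (add_nonneg (Nat.cast_nonneg DG) (Nat.cast_nonneg DH)).lt_of_ne
    fun h => hl'.ne' (by rw [← h, div_zero])
  refine W1_boxProd_le_of_weights hG hH hDG hDH x₁ x₂ y₁ y₂ hp hl' hl hD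
    (div_mul_cancel₀ _ hD.ne') ?_
  rw [add_comm (DH : ℝ), div_mul_cancel₀ _ hD.ne']
  ring

end OllivierLong
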